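/- arXiv:1208.3862 — 5 statements merged into one kernel-verified Lean document; each statement's English description precedes it below -/
import Mathlib

section
/- There exists a constant C, depending only on c_φ, C_φ, τ, M, S₀ and ∫x²φ(x)dx, such that for every n ≥ 1, every σ > 0 with √n·σ ≤ S₀ and every θ₀ ∈ ℝ with |θ₀| ≤ Mσ, the expectation over ε ~ N(0,1) of the posterior second moment satisfies E[B_{n,σ,θ₀}(ε)] ≤ C σ². -/
open MeasureTheory ProbabilityTheory

/-- Denominator integral `D_{n,σ,θ₀}(ε)`. -/
noncomputable def Dint (φ : ℝ → ℝ) (n : ℕ) (σ θ₀ ε : ℝ) : ℝ :=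
  ∫ v : ℝ, Real.exp (-v ^ 2 / 2 + ε * v) *
    ((Real.sqrt n * σ)⁻¹ * φ ((θ₀ + v / Real.sqrt n) / σ))

/-- Numerator integral `N_{n,σ,θ₀}(ε)`. -/
noncomputable def Nint (φ : ℝ → ℝ) (n : ℕ) (σ θ₀ ε : ℝ) : ℝ :=
  ∫ v : ℝ, v ^ 2 * Real.exp (-v ^ 2 / 2 + ε * v) *
    ((Real.sqrt n * σ)⁻¹ * φ ((θ₀ + v / Real.sqrt n) / σ))

/-- Posterior second moment `B_{n,σ,θ₀}(ε) = N/(n·D)`. -/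
noncomputable def Bpost (φ : ℝ → ℝ) (n : ℕ) (σ θ₀ ε : ℝ) : ℝ :=
  Nint φ n σ θ₀ ε / (n * Dint φ n σ θ₀ ε)


/-! Write `s = √n σ` and `t = θ₀ / σ`, so that the prior density of the local parameter
`v = √n (θ - θ₀)` is `s⁻¹ φ (v / s + t)`. Since `|t| + 1 ≤ τ`, this density is at least `cφ / s`
on `(-s, s)`; restricting the denominator integral to the half of `(-s, s)` where `ε v ≥ 0`
bounds it below by `cφ exp (-S₀² / 2)`, uniformly in `ε`. Averaging the numerator over
`ε ~ N(0, 1)` integrates the likelihood out, because `E exp (ε v) = exp (v² / 2)`, and leaves the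
prior second moment `s² ∫ (x - t)² φ ≤ 2 n σ² (∫ x² φ + M²)`. -/

open Set

section GaussianMixing

lemma integral_exp_quad_gaussianReal (v : ℝ) :
    ∫ ε, Real.exp (-v ^ 2 / 2 + ε * v) ∂(gaussianReal 0 1) = 1 := by
  have hmgf := congrFun (mgf_id_gaussianReal (μ := 0) (v := 1)) v
  simp only [mgf, id, NNReal.coe_one, zero_mul, one_mul, zero_add] at hmgf
  simp_rw [Real.exp_add, integral_const_mul, mul_comm _ v, hmgf, ← Real.exp_add]
  ring_nf
  exact Real.exp_zero

lemma integrable_exp_quad_gaussianReal (v : ℝ) :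
    Integrable (fun ε => Real.exp (-v ^ 2 / 2 + ε * v)) (gaussianReal 0 1) := by
  simp_rw [Real.exp_add, mul_comm _ v]
  exact (integrable_exp_mul_gaussianReal v).const_mul _

variable {h : ℝ → ℝ}

lemma integrable_prod_exp_quad_mul (hh : Integrable h) :
    Integrable (fun p : ℝ × ℝ => Real.exp (-p.2 ^ 2 / 2 + p.1 * p.2) * h p.2)
      ((gaussianReal 0 1).prod volume) := by
  have hmeas : AEStronglyMeasurable (fun p : ℝ × ℝ => Real.exp (-p.2 ^ 2 / 2 + p.1 * p.2) * h p.2)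
      ((gaussianReal 0 1).prod volume) :=
    (by fun_prop : Continuous fun p : ℝ × ℝ => Real.exp (-p.2 ^ 2 / 2 + p.1 * p.2))
      |>.aestronglyMeasurable.mul hh.1.comp_snd
  refine (integrable_prod_iff' hmeas).2 ⟨ae_of_all _ fun v => ?_, ?_⟩
  · exact (integrable_exp_quad_gaussianReal v).mul_const (h v)
  · have hnorm : ∀ v, ∫ ε, ‖Real.exp (-v ^ 2 / 2 + ε * v) * h v‖ ∂(gaussianReal 0 1) = ‖h v‖ := by
      intro v
      simp_rw [norm_mul, Real.norm_of_nonneg (Real.exp_pos _).le]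
      rw [integral_mul_const, integral_exp_quad_gaussianReal, one_mul]
    simp_rw [hnorm]
    exact hh.norm

lemma integrable_integral_exp_quad_mul (hh : Integrable h) :
    Integrable (fun ε => ∫ v, Real.exp (-v ^ 2 / 2 + ε * v) * h v) (gaussianReal 0 1) :=
  (integrable_prod_exp_quad_mul hh).integral_prod_left

lemma integral_gaussianReal_integral_exp_quad_mul (hh : Integrable h) :
    ∫ ε, (∫ v, Real.exp (-v ^ 2 / 2 + ε * v) * h v) ∂(gaussianReal 0 1) = ∫ v, h v := by
  rw [integral_integral_swap (integrable_prod_exp_quad_mul hh)]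
  simp_rw [integral_mul_const, integral_exp_quad_gaussianReal, one_mul]

end GaussianMixing

section LowerBound

variable {g : ℝ → ℝ} {s c : ℝ}

lemma integrable_exp_quad_mul (hg : Integrable g) (ε : ℝ) :
    Integrable (fun v => Real.exp (-v ^ 2 / 2 + ε * v) * g v) := by
  refine hg.bdd_mul (c := Real.exp (ε ^ 2 / 2)) (by fun_prop) (ae_of_all _ fun v => ?_)
  rw [Real.norm_of_nonneg (Real.exp_pos _).le, Real.exp_le_exp]
  nlinarith [sq_nonneg (v - ε)]

lemma le_integral_exp_quad_mul_of_nonneg (hg0 : ∀ v, 0 ≤ g v) (hg : Integrable g) (hs : 0 < s)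
    (hgc : ∀ v ∈ Ioo (-s) s, c ≤ g v) {ε : ℝ} (hε : 0 ≤ ε) :
    s * (Real.exp (-s ^ 2 / 2) * c) ≤ ∫ v, Real.exp (-v ^ 2 / 2 + ε * v) * g v := by
  have hint := integrable_exp_quad_mul hg ε
  have hpoint : ∀ v ∈ Ioo 0 s, Real.exp (-s ^ 2 / 2) * c ≤ Real.exp (-v ^ 2 / 2 + ε * v) * g v := by
    rintro v ⟨hv0, hvs⟩
    have hexp : Real.exp (-s ^ 2 / 2) ≤ Real.exp (-v ^ 2 / 2 + ε * v) :=
      Real.exp_le_exp.2 (by nlinarith [mul_nonneg hε hv0.le])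
    calc Real.exp (-s ^ 2 / 2) * c ≤ Real.exp (-s ^ 2 / 2) * g v :=
          mul_le_mul_of_nonneg_left (hgc v ⟨by linarith, hvs⟩) (Real.exp_pos _).le
      _ ≤ Real.exp (-v ^ 2 / 2 + ε * v) * g v := mul_le_mul_of_nonneg_right hexp (hg0 v)
  calc s * (Real.exp (-s ^ 2 / 2) * c) = volume.real (Ioo 0 s) • (Real.exp (-s ^ 2 / 2) * c) := by
        simp [hs.le]
    _ ≤ ∫ v in Ioo 0 s, Real.exp (-v ^ 2 / 2 + ε * v) * g v :=
        setIntegral_ge_of_const_le measurableSet_Ioo (by simp) hpoint hint.integrableOn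
    _ ≤ ∫ v, Real.exp (-v ^ 2 / 2 + ε * v) * g v :=
        setIntegral_le_integral hint (ae_of_all _ fun v => mul_nonneg (Real.exp_pos _).le (hg0 v))

lemma le_integral_exp_quad_mul (hg0 : ∀ v, 0 ≤ g v) (hg : Integrable g) (hs : 0 < s)
    (hgc : ∀ v ∈ Ioo (-s) s, c ≤ g v) (ε : ℝ) :
    s * (Real.exp (-s ^ 2 / 2) * c) ≤ ∫ v, Real.exp (-v ^ 2 / 2 + ε * v) * g v := by
  rcases le_total 0 ε with hε | hε
  · exact le_integral_exp_quad_mul_of_nonneg hg0 hg hs hgc hε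
  · have hrefl := le_integral_exp_quad_mul_of_nonneg (g := fun v => g (-v)) (fun v => hg0 (-v))
      hg.comp_neg hs (fun v hv => hgc (-v) ⟨by linarith [hv.2], by linarith [hv.1]⟩)
      (neg_nonneg.2 hε)
    rw [← integral_neg_eq_self]
    convert hrefl using 4 with v
    ring_nf

end LowerBound

section Rescaling

variable {φ F : ℝ → ℝ} {s : ℝ}

lemma MeasureTheory.Integrable.inv_mul_comp_div_add (hF : Integrable F) (hs : s ≠ 0) (t : ℝ) :
    Integrable (fun v => s⁻¹ * F (v / s + t)) :=
  ((hF.comp_add_right t).comp_div hs).const_mul s⁻¹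

lemma integral_inv_mul_comp_div_add (F : ℝ → ℝ) (hs : 0 < s) (t : ℝ) :
    ∫ v, s⁻¹ * F (v / s + t) = ∫ x, F x := by
  rw [integral_const_mul, Measure.integral_comp_div (fun x => F (x + t)),
    integral_add_right_eq_self, abs_of_pos hs, smul_eq_mul, inv_mul_cancel_left₀ hs.ne']

lemma sq_mul_inv_mul_comp_div_add_eq (φ : ℝ → ℝ) (hs : s ≠ 0) (t : ℝ) :
    (fun v => v ^ 2 * (s⁻¹ * φ (v / s + t))) =
      fun v => s⁻¹ * (fun x => s ^ 2 * ((x - t) ^ 2 * φ x)) (v / s + t) := by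
  funext v
  field_simp
  ring

lemma integral_sq_mul_inv_mul_comp_div_add (φ : ℝ → ℝ) (hs : 0 < s) (t : ℝ) :
    ∫ v, v ^ 2 * (s⁻¹ * φ (v / s + t)) = s ^ 2 * ∫ x, (x - t) ^ 2 * φ x := by
  rw [sq_mul_inv_mul_comp_div_add_eq φ hs.ne', ← integral_const_mul]
  exact integral_inv_mul_comp_div_add (fun x => s ^ 2 * ((x - t) ^ 2 * φ x)) hs t

lemma integrable_sub_sq_mul (hφ0 : ∀ x, 0 ≤ φ x) (hφ : Integrable φ)
    (hφ2 : Integrable fun x => x ^ 2 * φ x) (t : ℝ) :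
    Integrable fun x => (x - t) ^ 2 * φ x := by
  refine ((hφ2.const_mul 2).add (hφ.const_mul (2 * t ^ 2))).mono'
    ((by fun_prop : Continuous fun x : ℝ => (x - t) ^ 2).aestronglyMeasurable.mul hφ.1)
    (ae_of_all _ fun x => ?_)
  rw [Real.norm_of_nonneg (mul_nonneg (sq_nonneg _) (hφ0 x))]
  show _ ≤ 2 * (x ^ 2 * φ x) + 2 * t ^ 2 * φ x
  nlinarith [mul_nonneg (sq_nonneg (x + t)) (hφ0 x)]

lemma integral_sub_sq_mul_le (hφ0 : ∀ x, 0 ≤ φ x) (hφ : Integrable φ)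
    (hφ2 : Integrable fun x => x ^ 2 * φ x) (t : ℝ) :
    ∫ x, (x - t) ^ 2 * φ x ≤ 2 * (∫ x, x ^ 2 * φ x) + 2 * t ^ 2 * ∫ x, φ x := by
  have hbound : Integrable fun x => 2 * (x ^ 2 * φ x) + 2 * t ^ 2 * φ x :=
    (hφ2.const_mul 2).add (hφ.const_mul _)
  calc ∫ x, (x - t) ^ 2 * φ x ≤ ∫ x, 2 * (x ^ 2 * φ x) + 2 * t ^ 2 * φ x :=
        integral_mono (integrable_sub_sq_mul hφ0 hφ hφ2 t) hbound fun x => by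
          nlinarith [mul_nonneg (sq_nonneg (x + t)) (hφ0 x)]
    _ = 2 * (∫ x, x ^ 2 * φ x) + 2 * t ^ 2 * ∫ x, φ x := by
        rw [integral_add (hφ2.const_mul 2) (hφ.const_mul _), integral_const_mul,
          integral_const_mul]

lemma integrable_sq_mul_inv_mul_comp_div_add (hφ0 : ∀ x, 0 ≤ φ x) (hφ : Integrable φ)
    (hφ2 : Integrable fun x => x ^ 2 * φ x) (hs : s ≠ 0) (t : ℝ) :
    Integrable fun v => v ^ 2 * (s⁻¹ * φ (v / s + t)) := by
  rw [sq_mul_inv_mul_comp_div_add_eq φ hs]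
  exact ((integrable_sub_sq_mul hφ0 hφ hφ2 t).const_mul _).inv_mul_comp_div_add hs t

end Rescaling

lemma le_integral_exp_quad_mul_inv_mul_comp_div_add {φ : ℝ → ℝ} {c τ s t : ℝ}
    (hφ0 : ∀ x, 0 ≤ φ x) (hφ : Integrable φ) (hlb : ∀ x ∈ Ioo (-τ) τ, c ≤ φ x) (hs : 0 < s)
    (ht : |t| + 1 ≤ τ) (ε : ℝ) :
    c * Real.exp (-s ^ 2 / 2) ≤ ∫ v, Real.exp (-v ^ 2 / 2 + ε * v) * (s⁻¹ * φ (v / s + t)) := by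
  have hmem : ∀ v ∈ Ioo (-s) s, v / s + t ∈ Ioo (-τ) τ := by
    rintro v ⟨hv₁, hv₂⟩
    have hv : v / s ∈ Ioo (-1) 1 :=
      ⟨by rw [lt_div_iff₀ hs]; linarith, by rw [div_lt_iff₀ hs]; linarith⟩
    exact ⟨by linarith [hv.1, neg_abs_le t], by linarith [hv.2, le_abs_self t]⟩
  calc c * Real.exp (-s ^ 2 / 2) = s * (Real.exp (-s ^ 2 / 2) * (s⁻¹ * c)) := by
        field_simp
    _ ≤ _ := le_integral_exp_quad_mul (fun v => mul_nonneg (inv_nonneg.2 hs.le) (hφ0 _))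
        (hφ.inv_mul_comp_div_add hs.ne' t) hs
        (fun v hv => mul_le_mul_of_nonneg_left (hlb _ (hmem v hv)) (inv_nonneg.2 hs.le)) ε

lemma integral_posterior_sq_le {g : ℝ → ℝ} {c n : ℝ} (hg0 : ∀ v, 0 ≤ g v)
    (hg2 : Integrable fun v => v ^ 2 * g v) (hc : 0 < c) (hn : 0 < n)
    (hD : ∀ ε, c ≤ ∫ v, Real.exp (-v ^ 2 / 2 + ε * v) * g v) :
    ∫ ε, (∫ v, v ^ 2 * Real.exp (-v ^ 2 / 2 + ε * v) * g v) /
        (n * ∫ v, Real.exp (-v ^ 2 / 2 + ε * v) * g v) ∂(gaussianReal 0 1) ≤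
      (∫ v, v ^ 2 * g v) / (n * c) := by
  have hN : ∀ ε, ∫ v, v ^ 2 * Real.exp (-v ^ 2 / 2 + ε * v) * g v =
      ∫ v, Real.exp (-v ^ 2 / 2 + ε * v) * (v ^ 2 * g v) :=
    fun ε => integral_congr_ae (ae_of_all _ fun v => by ring)
  have hN0 : ∀ ε, 0 ≤ ∫ v, v ^ 2 * Real.exp (-v ^ 2 / 2 + ε * v) * g v := fun ε =>
    integral_nonneg fun v => mul_nonneg (mul_nonneg (sq_nonneg v) (Real.exp_pos _).le) (hg0 v)
  calc _ ≤ ∫ ε, (∫ v, v ^ 2 * Real.exp (-v ^ 2 / 2 + ε * v) * g v) / (n * c)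
          ∂(gaussianReal 0 1) := by
        refine integral_mono_of_nonneg
          (ae_of_all _ fun ε => div_nonneg (hN0 ε) (by nlinarith [hD ε]))
          (by simpa only [hN] using (integrable_integral_exp_quad_mul hg2).div_const (n * c))
          (ae_of_all _ fun ε => ?_)
        exact div_le_div_of_nonneg_left (hN0 ε) (by positivity)
          (mul_le_mul_of_nonneg_left (hD ε) hn.le)
    _ = (∫ v, v ^ 2 * g v) / (n * c) := by
        rw [integral_div]
        simp_rw [hN]
        rw [integral_gaussianReal_integral_exp_quad_mul hg2]

lemma Bpost_eq (φ : ℝ → ℝ) (n : ℕ) (σ θ₀ ε : ℝ) :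
    Bpost φ n σ θ₀ ε =
      (∫ v, v ^ 2 * Real.exp (-v ^ 2 / 2 + ε * v) *
          ((Real.sqrt n * σ)⁻¹ * φ (v / (Real.sqrt n * σ) + θ₀ / σ))) /
        (n * ∫ v, Real.exp (-v ^ 2 / 2 + ε * v) *
          ((Real.sqrt n * σ)⁻¹ * φ (v / (Real.sqrt n * σ) + θ₀ / σ))) := by
  have harg : ∀ v, (θ₀ + v / Real.sqrt n) / σ = v / (Real.sqrt n * σ) + θ₀ / σ :=
    fun v => by ring
  simp only [Bpost, Nint, Dint, harg]

theorem small_sigma_bound_general (φ : ℝ → ℝ) (cφ τ M S₀ : ℝ)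
    (hφ_nonneg : ∀ x, 0 ≤ φ x)
    (hφ_prob : (∫ x : ℝ, φ x) = 1)
    (hc : 0 < cφ)
    (hlb : ∀ x ∈ Set.Ioo (-τ) τ, cφ ≤ φ x)
    (hmom : Integrable (fun x : ℝ => x ^ 2 * φ x))
    (hτ : M + 1 ≤ τ) :
    ∃ C : ℝ, ∀ n : ℕ, 1 ≤ n → ∀ σ : ℝ, 0 < σ → Real.sqrt n * σ ≤ S₀ →
      ∀ θ₀ : ℝ, |θ₀| ≤ M * σ →
        (∫ ε, Bpost φ n σ θ₀ ε ∂(gaussianReal 0 1)) ≤ C * σ ^ 2 := by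
  have hφ : Integrable φ := .of_integral_ne_zero (by rw [hφ_prob]; exact one_ne_zero)
  set c := cφ * Real.exp (-S₀ ^ 2 / 2)
  have hc_pos : 0 < c := by positivity
  refine ⟨2 * ((∫ x, x ^ 2 * φ x) + M ^ 2) / c, fun n hn σ hσ hsS θ₀ hθ => ?_⟩
  set s := Real.sqrt n * σ with hs_def
  set t := θ₀ / σ
  have hn0 : (0 : ℝ) < n := by exact_mod_cast hn
  have hs : 0 < s := by positivity
  have ht : |t| ≤ M := by rwa [abs_div, abs_of_pos hσ, div_le_iff₀ hσ]
  have hD : ∀ ε, c ≤ ∫ v, Real.exp (-v ^ 2 / 2 + ε * v) * (s⁻¹ * φ (v / s + t)) := fun ε =>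
    (mul_le_mul_of_nonneg_left (Real.exp_le_exp.2 (by nlinarith)) hc.le).trans
      (le_integral_exp_quad_mul_inv_mul_comp_div_add hφ_nonneg hφ hlb hs (by linarith) ε)
  have hmoment : ∫ x, (x - t) ^ 2 * φ x ≤ 2 * ((∫ x, x ^ 2 * φ x) + M ^ 2) := by
    nlinarith [integral_sub_sq_mul_le hφ_nonneg hφ hmom t, abs_nonneg t, sq_abs t]
  simp_rw [Bpost_eq]
  calc _ ≤ (∫ v, v ^ 2 * (s⁻¹ * φ (v / s + t))) / (n * c) :=
        integral_posterior_sq_le (fun v => mul_nonneg (inv_nonneg.2 hs.le) (hφ_nonneg _))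
          (integrable_sq_mul_inv_mul_comp_div_add hφ_nonneg hφ hmom hs.ne' t) hc_pos hn0 hD
    _ = (∫ x, (x - t) ^ 2 * φ x) / c * σ ^ 2 := by
        rw [integral_sq_mul_inv_mul_comp_div_add φ hs t, hs_def, mul_pow, Real.sq_sqrt hn0.le]
        field_simp
    _ ≤ 2 * ((∫ x, x ^ 2 * φ x) + M ^ 2) / c * σ ^ 2 := by gcongr

theorem small_sigma_bound (φ : ℝ → ℝ) (cφ Cφ τ M S₀ : ℝ)
    (hφ_meas : Measurable φ) (hφ_nonneg : ∀ x, 0 ≤ φ x)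
    (hφ_prob : (∫ x : ℝ, φ x) = 1)
    (hc : 0 < cφ) (hcC : cφ ≤ Cφ)
    (hub : ∀ x : ℝ, φ x ≤ Cφ)
    (hlb : ∀ x ∈ Set.Ioo (-τ) τ, cφ ≤ φ x)
    (hmom : Integrable (fun x : ℝ => x ^ 2 * φ x))
    (hM : 0 < M) (hτ : M + 1 ≤ τ) (hS : 0 < S₀) :
    ∃ C : ℝ, ∀ n : ℕ, 1 ≤ n → ∀ σ : ℝ, 0 < σ → Real.sqrt n * σ ≤ S₀ →
      ∀ θ₀ : ℝ, |θ₀| ≤ M * σ →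
        (∫ ε, Bpost φ n σ θ₀ ε ∂(gaussianReal 0 1)) ≤ C * σ ^ 2 :=
  small_sigma_bound_general φ cφ τ M S₀ hφ_nonneg hφ_prob hc hlb hmom hτ
end

section
/- There exists a constant C, depending only on c_φ, C_φ, τ, M and S₀, such that for every n ≥ 1, every σ > 0 with √n·σ ≥ S₀ and every θ₀ ∈ ℝ with |θ₀| ≤ Mσ, the expectation over ε ~ N(0,1) of the posterior second moment satisfies E[B_{n,σ,θ₀}(ε)] ≤ C/n. -/
open MeasureTheory ProbabilityTheory

/-!
Write `g v = (√n σ)⁻¹ φ((θ₀ + v/√n)/σ)`, so that `B = N/(nD)` with `N`, `D` the integrals of `v²`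
and `1` against `exp(-v²/2 + εv) g v`. Since `g ≤ Cφ/(√n σ)`, `N` is at most that constant times
the Gaussian moment `√(2π) e^{ε²/2} (1 + ε²)`. Since `|θ₀| ≤ Mσ` and `√n σ ≥ S₀`, `g ≥ cφ/(√n σ)`
on `[-L, L]` with `L = S₀(τ - M)/2`; on the half of this interval where `v` has the sign of `ε`
the exponent is at least `-L²/2 + |ε|L/2`, so `D ≥ (cφ/(√n σ)) (L/2) e^{-L²/2 + |ε|L/2}`.
The scale `√n σ` cancels in `N/D`, and the standard normal density cancels `e^{ε²/2}`, leaving the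
integrable `(1 + ε²) e^{-L|ε|/2}`.
-/

open Real Set
open scoped NNReal

lemma exp_neg_sq_half_add_mul_eq (ε v : ℝ) :
    exp (-v ^ 2 / 2 + ε * v) = √(2 * π) * exp (ε ^ 2 / 2) * gaussianPDFReal ε 1 v := by
  have : √(2 * π) ≠ 0 := by positivity
  rw [gaussianPDFReal, NNReal.coe_one, mul_one, mul_one, mul_comm _ (exp _), mul_assoc,
    mul_inv_cancel_left₀ this, ← exp_add]
  ring_nf

lemma integrable_exp_neg_sq_half_add_mul (ε : ℝ) :
    Integrable fun v : ℝ ↦ exp (-v ^ 2 / 2 + ε * v) := by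
  simp_rw [exp_neg_sq_half_add_mul_eq ε]
  exact (integrable_gaussianPDFReal ε 1).const_mul _

lemma integral_sq_gaussianReal (μ : ℝ) (v : ℝ≥0) :
    ∫ x, x ^ 2 ∂gaussianReal μ v = v + μ ^ 2 := by
  have h := variance_eq_sub (memLp_id_gaussianReal (μ := μ) (v := v) 2)
  simp only [variance_id_gaussianReal, Pi.pow_apply, id_eq] at h
  rw [integral_id_gaussianReal] at h
  linarith

lemma integrable_sq_mul_exp_neg_sq_half_add_mul (ε : ℝ) :
    Integrable fun v : ℝ ↦ v ^ 2 * exp (-v ^ 2 / 2 + ε * v) := by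
  have h := (memLp_id_gaussianReal (μ := ε) (v := 1) 2).integrable_sq
  rw [gaussianReal_of_var_ne_zero _ one_ne_zero, integrable_withDensity_iff_integrable_smul'
    (measurable_gaussianPDF _ _) (ae_of_all _ fun _ ↦ gaussianPDF_lt_top)] at h
  refine (h.const_mul (√(2 * π) * exp (ε ^ 2 / 2))).congr (ae_of_all _ fun v ↦ ?_)
  simp only [gaussianPDF, ENNReal.toReal_ofReal (gaussianPDFReal_nonneg _ _ _), id, smul_eq_mul,
    exp_neg_sq_half_add_mul_eq ε v]
  ring

lemma integral_sq_mul_exp_neg_sq_half_add_mul (ε : ℝ) :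
    ∫ v, v ^ 2 * exp (-v ^ 2 / 2 + ε * v) = √(2 * π) * exp (ε ^ 2 / 2) * (1 + ε ^ 2) := by
  have h := integral_sq_gaussianReal ε 1
  rw [integral_gaussianReal_eq_integral_smul one_ne_zero, NNReal.coe_one] at h
  rw [← h, ← integral_const_mul]
  congr 1 with v
  rw [exp_neg_sq_half_add_mul_eq ε v, smul_eq_mul]
  ring

theorem MeasureTheory.IntegrableOn.integrable_comp_abs {E : Type*} [NormedAddCommGroup E]
    {f : ℝ → E} (hf : IntegrableOn f (Ioi 0)) : Integrable fun x ↦ f |x| := by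
  have hpos : IntegrableOn (fun x ↦ f |x|) (Ioi 0) :=
    hf.congr_fun (fun x hx ↦ by rw [abs_of_pos hx]) measurableSet_Ioi
  rw [← integrableOn_univ, ← Iio_union_Ici (a := (0 : ℝ)), integrableOn_union,
    integrableOn_Ici_iff_integrableOn_Ioi]
  refine ⟨?_, hpos⟩
  rw [← (Measure.measurePreserving_neg (volume : Measure ℝ)).integrableOn_comp_preimage
    (Homeomorph.neg ℝ).measurableEmbedding]
  simpa only [Function.comp_def, abs_neg, neg_preimage, neg_Iio, neg_zero] using hpos

lemma integrable_one_add_sq_mul_exp_neg_mul_abs {a : ℝ} (ha : 0 < a) :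
    Integrable fun x : ℝ ↦ (1 + x ^ 2) * exp (-(a * |x|)) := by
  have hsq := integrableOn_rpow_mul_exp_neg_mul_rpow (s := 2) (p := 1) (by norm_num) one_pos ha
  have hIoi : IntegrableOn (fun x : ℝ ↦ (1 + x ^ 2) * exp (-(a * x))) (Ioi 0) := by
    refine ((exp_neg_integrableOn_Ioi 0 ha).add hsq).congr_fun (fun x _ ↦ ?_) measurableSet_Ioi
    simp only [Pi.add_apply, rpow_two, rpow_one, neg_mul]
    ring
  simpa only [sq_abs] using hIoi.integrable_comp_abs

section TiltedWeight

variable {g : ℝ → ℝ} {k K L : ℝ}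

lemma exists_Icc_subset_and_abs_mul_le (ε : ℝ) (hL : 0 ≤ L) :
    ∃ a, Icc a (a + L / 2) ⊆ Icc (-L) L ∧ ∀ v ∈ Icc a (a + L / 2), |ε| * (L / 2) ≤ ε * v := by
  rcases le_or_gt 0 ε with hε | hε
  · refine ⟨L / 2, Icc_subset_Icc (by linarith) (by linarith), fun v hv ↦ ?_⟩
    rw [abs_of_nonneg hε]
    exact mul_le_mul_of_nonneg_left hv.1 hε
  · refine ⟨-L, Icc_subset_Icc le_rfl (by linarith), fun v hv ↦ ?_⟩
    rw [abs_of_neg hε]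
    nlinarith [hv.2]

lemma le_integral_exp_neg_sq_half_add_mul_mul (ε : ℝ) (hL : 0 ≤ L) (hg : ∀ v, 0 ≤ g v)
    (hgk : ∀ v ∈ Icc (-L) L, k ≤ g v)
    (hint : Integrable fun v ↦ exp (-v ^ 2 / 2 + ε * v) * g v) :
    k * exp (-L ^ 2 / 2 + |ε| * (L / 2)) * (L / 2) ≤ ∫ v, exp (-v ^ 2 / 2 + ε * v) * g v := by
  obtain ⟨a, hsub, hmul⟩ := exists_Icc_subset_and_abs_mul_le ε hL
  have hle : ∀ v ∈ Icc a (a + L / 2),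
      k * exp (-L ^ 2 / 2 + |ε| * (L / 2)) ≤ exp (-v ^ 2 / 2 + ε * v) * g v := by
    intro v hv
    have hvL : v ^ 2 ≤ L ^ 2 := sq_le_sq' (hsub hv).1 (hsub hv).2
    calc k * exp (-L ^ 2 / 2 + |ε| * (L / 2))
        ≤ g v * exp (-L ^ 2 / 2 + |ε| * (L / 2)) :=
          mul_le_mul_of_nonneg_right (hgk v (hsub hv)) (exp_pos _).le
      _ ≤ g v * exp (-v ^ 2 / 2 + ε * v) :=
          mul_le_mul_of_nonneg_left (exp_le_exp.2 (by linarith [hmul v hv])) (hg v)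
      _ = exp (-v ^ 2 / 2 + ε * v) * g v := mul_comm _ _
  have hset := setIntegral_ge_of_const_le_real measurableSet_Icc
    (by rw [Real.volume_Icc]; exact ENNReal.ofReal_ne_top) hle hint.integrableOn
  rw [Real.volume_real_Icc_of_le (by linarith), add_sub_cancel_left] at hset
  exact hset.trans (setIntegral_le_integral hint (ae_of_all _ fun v ↦ by
    have := hg v; positivity))

lemma integral_sq_mul_exp_neg_sq_half_add_mul_mul_le (ε : ℝ) (hg : ∀ v, 0 ≤ g v)
    (hgK : ∀ v, g v ≤ K) :
    ∫ v, v ^ 2 * exp (-v ^ 2 / 2 + ε * v) * g v ≤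
      K * (√(2 * π) * exp (ε ^ 2 / 2) * (1 + ε ^ 2)) := by
  rw [← integral_sq_mul_exp_neg_sq_half_add_mul, ← integral_const_mul]
  refine integral_mono_of_nonneg (ae_of_all _ fun v ↦ by have := hg v; positivity)
    ((integrable_sq_mul_exp_neg_sq_half_add_mul ε).const_mul K) (ae_of_all _ fun v ↦ ?_)
  dsimp only
  rw [mul_comm K]
  exact mul_le_mul_of_nonneg_left (hgK v) (by positivity)

lemma integral_sq_mul_div_integral_le (ε : ℝ) (hg_meas : Measurable g) (hg : ∀ v, 0 ≤ g v)
    (hgK : ∀ v, g v ≤ K) (hk : 0 < k) (hgk : ∀ v ∈ Icc (-L) L, k ≤ g v) (hL : 0 < L) :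
    (∫ v, v ^ 2 * exp (-v ^ 2 / 2 + ε * v) * g v) / ∫ v, exp (-v ^ 2 / 2 + ε * v) * g v ≤
      K / k * (2 / L * exp (L ^ 2 / 2)) * (√(2 * π) * exp (ε ^ 2 / 2) * (1 + ε ^ 2)) *
        exp (-(L / 2 * |ε|)) := by
  have hint : Integrable fun v ↦ exp (-v ^ 2 / 2 + ε * v) * g v :=
    (integrable_exp_neg_sq_half_add_mul ε).mul_bdd hg_meas.aestronglyMeasurable
      (ae_of_all _ fun v ↦ by rw [norm_of_nonneg (hg v)]; exact hgK v)
  have hD := le_integral_exp_neg_sq_half_add_mul_mul ε hL.le hg hgk hint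
  have hN := integral_sq_mul_exp_neg_sq_half_add_mul_mul_le ε hg hgK
  have hK : 0 ≤ K := (hg 0).trans (hgK 0)
  have hexp : exp (-L ^ 2 / 2 + |ε| * (L / 2)) = (exp (L ^ 2 / 2) * exp (-(L / 2 * |ε|)))⁻¹ := by
    rw [← exp_add, ← exp_neg]
    ring_nf
  calc (∫ v, v ^ 2 * exp (-v ^ 2 / 2 + ε * v) * g v) / ∫ v, exp (-v ^ 2 / 2 + ε * v) * g v
      ≤ K * (√(2 * π) * exp (ε ^ 2 / 2) * (1 + ε ^ 2)) /
          (k * exp (-L ^ 2 / 2 + |ε| * (L / 2)) * (L / 2)) :=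
        div_le_div₀ (by positivity) hN (by positivity) hD
    _ = _ := by
        rw [hexp]
        field_simp

lemma integral_gaussianReal_integral_sq_mul_div_integral_le (hg_meas : Measurable g)
    (hg : ∀ v, 0 ≤ g v) (hgK : ∀ v, g v ≤ K) (hk : 0 < k) (hgk : ∀ v ∈ Icc (-L) L, k ≤ g v)
    (hL : 0 < L) :
    ∫ ε, (∫ v, v ^ 2 * exp (-v ^ 2 / 2 + ε * v) * g v) / (∫ v, exp (-v ^ 2 / 2 + ε * v) * g v)
        ∂gaussianReal 0 1 ≤
      K / k * (2 / L * exp (L ^ 2 / 2)) * ∫ x, (1 + x ^ 2) * exp (-(L / 2 * |x|)) := by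
  have hpdf : ∀ x, gaussianPDFReal 0 1 x * (√(2 * π) * exp (x ^ 2 / 2)) = 1 := fun x ↦ by
    have : √(2 * π) ≠ 0 := by positivity
    rw [gaussianPDFReal, NNReal.coe_one, mul_one, mul_one, sub_zero]
    field_simp
    rw [← exp_add]
    ring_nf
    exact exp_zero
  rw [integral_gaussianReal_eq_integral_smul one_ne_zero, ← integral_const_mul]
  refine integral_mono_of_nonneg (ae_of_all _ fun ε ↦ ?_)
    ((integrable_one_add_sq_mul_exp_neg_mul_abs (half_pos hL)).const_mul _)
    (ae_of_all _ fun ε ↦ ?_)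
  · refine smul_nonneg (gaussianPDFReal_nonneg _ _ _) (div_nonneg ?_ ?_) <;>
      exact integral_nonneg fun v ↦ by have := hg v; positivity
  · calc gaussianPDFReal 0 1 ε • _
        ≤ gaussianPDFReal 0 1 ε * (K / k * (2 / L * exp (L ^ 2 / 2)) *
            (√(2 * π) * exp (ε ^ 2 / 2) * (1 + ε ^ 2)) * exp (-(L / 2 * |ε|))) :=
          mul_le_mul_of_nonneg_left (integral_sq_mul_div_integral_le ε hg_meas hg hgK hk hgk hL)
            (gaussianPDFReal_nonneg _ _ _)
      _ = _ := by
          linear_combination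
            K / k * (2 / L * exp (L ^ 2 / 2)) * (1 + ε ^ 2) * exp (-(L / 2 * |ε|)) * hpdf ε

end TiltedWeight

lemma div_mem_Ioo_of_abs_le {θ₀ σ r v M τ S₀ : ℝ} (hσ : 0 < σ) (hr : 0 < r) (hrσ : S₀ ≤ r * σ)
    (hθ : |θ₀| ≤ M * σ) (hMτ : M < τ) (hv : |v| ≤ S₀ * (τ - M) / 2) :
    (θ₀ + v / r) / σ ∈ Ioo (-τ) τ := by
  rw [mem_Ioo, ← abs_lt, abs_div, abs_of_pos hσ, div_lt_iff₀ hσ]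
  have hvr : |v / r| ≤ (τ - M) / 2 * σ := by
    rw [abs_div, abs_of_pos hr, div_le_iff₀ hr]
    nlinarith [sub_pos.2 hMτ]
  calc |θ₀ + v / r| ≤ |θ₀| + |v / r| := abs_add_le _ _
    _ < τ * σ := by nlinarith [sub_pos.2 hMτ]

theorem large_sigma_bound_general (φ : ℝ → ℝ) (cφ Cφ τ M S₀ : ℝ)
    (hφ_meas : Measurable φ) (hφ_nonneg : ∀ x, 0 ≤ φ x)
    (hc : 0 < cφ)
    (hub : ∀ x : ℝ, φ x ≤ Cφ)
    (hlb : ∀ x ∈ Set.Ioo (-τ) τ, cφ ≤ φ x)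
    (hMτ : M < τ) (hS : 0 < S₀) :
    ∃ C : ℝ, ∀ n : ℕ, 1 ≤ n → ∀ σ : ℝ, 0 < σ → S₀ ≤ Real.sqrt n * σ →
      ∀ θ₀ : ℝ, |θ₀| ≤ M * σ →
        (∫ ε, Bpost φ n σ θ₀ ε ∂(gaussianReal 0 1)) ≤ C / n := by
  set L := S₀ * (τ - M) / 2
  have hL : 0 < L := by have := sub_pos.2 hMτ; positivity
  refine ⟨Cφ / cφ * (2 / L * exp (L ^ 2 / 2)) * ∫ x, (1 + x ^ 2) * exp (-(L / 2 * |x|)),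
    fun n hn σ hσ hsσ θ₀ hθ ↦ ?_⟩
  have hsqrt : 0 < √(n : ℝ) := sqrt_pos.2 (by exact_mod_cast hn)
  have hs : 0 < (√n * σ)⁻¹ := inv_pos.2 (mul_pos hsqrt hσ)
  have hbound := integral_gaussianReal_integral_sq_mul_div_integral_le
    (g := fun v ↦ (√n * σ)⁻¹ * φ ((θ₀ + v / √n) / σ)) (K := (√n * σ)⁻¹ * Cφ) (L := L)
    (by fun_prop) (fun v ↦ mul_nonneg hs.le (hφ_nonneg _))
    (fun v ↦ mul_le_mul_of_nonneg_left (hub _) hs.le) (mul_pos hs hc)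
    (fun v hv ↦ mul_le_mul_of_nonneg_left
      (hlb _ (div_mem_Ioo_of_abs_le hσ hsqrt hsσ hθ hMτ (abs_le.2 hv))) hs.le) hL
  rw [mul_div_mul_left _ _ hs.ne'] at hbound
  simp only [Bpost, Nint, Dint, div_mul_eq_div_div_swap, integral_div]
  exact div_le_div_of_nonneg_right hbound (Nat.cast_nonneg n)

theorem large_sigma_bound (φ : ℝ → ℝ) (cφ Cφ τ M S₀ : ℝ)
    (hφ_meas : Measurable φ) (hφ_nonneg : ∀ x, 0 ≤ φ x)
    (hφ_prob : (∫ x : ℝ, φ x) = 1)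
    (hc : 0 < cφ) (hcC : cφ ≤ Cφ)
    (hub : ∀ x : ℝ, φ x ≤ Cφ)
    (hlb : ∀ x ∈ Set.Ioo (-τ) τ, cφ ≤ φ x)
    (hmom : Integrable (fun x : ℝ => x ^ 2 * φ x))
    (hM : 0 < M) (hMτ : M < τ) (hS : 0 < S₀) :
    ∃ C : ℝ, ∀ n : ℕ, 1 ≤ n → ∀ σ : ℝ, 0 < σ → S₀ ≤ Real.sqrt n * σ →
      ∀ θ₀ : ℝ, |θ₀| ≤ M * σ →
        (∫ ε, Bpost φ n σ θ₀ ε ∂(gaussianReal 0 1)) ≤ C / n :=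
  large_sigma_bound_general φ cφ Cφ τ M S₀ hφ_meas hφ_nonneg hc hub hlb hMτ hS
end

section
/- For every n ≥ 1, every σ > 0, every θ₀ ∈ ℝ with |θ₀| ≤ Mσ, and every ε ∈ ℝ, the denominator integral satisfies D_{n,σ,θ₀}(ε) = ∫_ℝ exp(−v²/2 + εv)·(√n σ)^{−1} φ((θ₀ + v/√n)/σ) dv ≥ 2 c_φ · exp(−n σ²/6). -/
/-!
On the window `|v| < a := √n σ` the argument of `φ` stays in `(-τ, τ)`, so there the integrand
is at least `cφ / a` times the Gaussian factor `exp (-v²/2 + εv)`. Jensen's inequality for `exp`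
bounds the integral of that factor over `(-a, a)` below by `2a` times `exp` of its average
exponent, which is `-a²/6` whatever `ε` is, because the linear term averages out on a symmetric
interval.
-/

open MeasureTheory ProbabilityTheory

open Real Set
open scoped Interval

theorem ConvexOn.map_intervalAverage_le {g f : ℝ → ℝ} {a b : ℝ} (hab : a < b)
    (hg : ConvexOn ℝ univ g) (hgc : Continuous g) (hf : ContinuousOn f (Icc a b)) :
    g (⨍ x in a..b, f x) ≤ ⨍ x in a..b, g (f x) := by
  rw [uIoc_of_le hab.le]
  have : NeZero (volume.restrict (Ioc a b)) := ⟨by simp [hab]⟩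
  exact hg.map_average_le hgc.continuousOn isClosed_univ (by simp)
    (hf.integrableOn_Icc.mono_set Ioc_subset_Icc_self)
    ((hgc.comp_continuousOn hf).integrableOn_Icc.mono_set Ioc_subset_Icc_self)

theorem integrable_exp_neg_mul_sq_add_mul {b : ℝ} (hb : 0 < b) (c : ℝ) :
    Integrable fun x : ℝ => exp (-b * x ^ 2 + c * x) := by
  convert (integrable_cexp_quadratic (b := b) (by simpa using hb) c 0).norm using 2 with x
  rw [Complex.norm_exp]
  norm_cast
  simp

theorem integral_neg_sq_div_two_add_mul_symm (a ε : ℝ) :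
    ∫ v in -a..a, (-v ^ 2 / 2 + ε * v) = -a ^ 3 / 3 := by
  rw [intervalIntegral.integral_add (by apply Continuous.intervalIntegrable; fun_prop)
    (by apply Continuous.intervalIntegrable; fun_prop), intervalIntegral.integral_const_mul]
  simp only [intervalIntegral.integral_div, intervalIntegral.integral_neg, integral_pow,
    integral_id]
  ring

theorem two_mul_mul_exp_le_integral_exp_neg_sq_div_two_add_mul {a : ℝ} (ha : 0 < a) (ε : ℝ) :
    2 * a * exp (-a ^ 2 / 6) ≤ ∫ v in -a..a, exp (-v ^ 2 / 2 + ε * v) := by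
  have hJensen := convexOn_exp.map_intervalAverage_le (neg_lt_self ha) continuous_exp
    (f := fun v => -v ^ 2 / 2 + ε * v) (by fun_prop)
  have hlen : a - -a = 2 * a := by ring
  rw [interval_average_eq_div, interval_average_eq_div, integral_neg_sq_div_two_add_mul_symm,
    hlen, le_div_iff₀ (by positivity)] at hJensen
  calc 2 * a * exp (-a ^ 2 / 6) = exp (-a ^ 3 / 3 / (2 * a)) * (2 * a) := by
        rw [mul_comm]; congr 2; field_simp; ring
    _ ≤ _ := hJensen

theorem abs_add_div_div_lt_add_one {θ v s σ M : ℝ} (hs : 0 < s) (hσ : 0 < σ)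
    (hθ : |θ| ≤ M * σ) (hv : |v| < s * σ) : |(θ + v / s) / σ| < M + 1 := by
  have hvs : |v| / s < σ := by rwa [div_lt_iff₀ hs, mul_comm]
  rw [abs_div, abs_of_pos hσ, div_lt_iff₀ hσ]
  calc |θ + v / s| ≤ |θ| + |v| / s :=
        (abs_add_le _ _).trans_eq (by rw [abs_div, abs_of_pos hs])
    _ < (M + 1) * σ := by linarith

theorem denominator_lower_bound_general (φ : ℝ → ℝ) (cφ Cφ τ M : ℝ)
    (hφ_meas : Measurable φ) (hφ_nonneg : ∀ x, 0 ≤ φ x)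
    (hc : 0 < cφ)
    (hub : ∀ x : ℝ, φ x ≤ Cφ)
    (hlb : ∀ x ∈ Set.Ioo (-τ) τ, cφ ≤ φ x)
    (hτ : M + 1 ≤ τ) :
    ∀ n : ℕ, 1 ≤ n → ∀ σ : ℝ, 0 < σ → ∀ θ₀ : ℝ, |θ₀| ≤ M * σ → ∀ ε : ℝ,
      2 * cφ * Real.exp (-(n * σ ^ 2) / 6) ≤ Dint φ n σ θ₀ ε := by
  intro n hn σ hσ θ₀ hθ₀ ε
  have hs : 0 < √(n : ℝ) := Real.sqrt_pos.mpr (by exact_mod_cast hn)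
  set a := √(n : ℝ) * σ
  have ha : 0 < a := mul_pos hs hσ
  have ha_sq : a ^ 2 = n * σ ^ 2 := by rw [mul_pow, Real.sq_sqrt (by positivity)]
  set G : ℝ → ℝ := fun v => exp (-v ^ 2 / 2 + ε * v)
  set F : ℝ → ℝ := fun v => G v * (a⁻¹ * φ ((θ₀ + v / √(n : ℝ)) / σ))
  have hF_nonneg (v : ℝ) : 0 ≤ F v := by
    have := hφ_nonneg ((θ₀ + v / √(n : ℝ)) / σ); positivity
  have hG_int : Integrable G := by
    simpa [G, neg_div, div_eq_inv_mul] using integrable_exp_neg_mul_sq_add_mul one_half_pos ε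
  have hF_int : Integrable F :=
    hG_int.mul_bdd (c := a⁻¹ * Cφ)
      ((hφ_meas.comp (by fun_prop)).const_mul _).aestronglyMeasurable
      (.of_forall fun v => by
        rw [Real.norm_of_nonneg (nonneg_of_mul_nonneg_right (hF_nonneg v) (exp_pos _))]
        gcongr
        exact hub _)
  have hF_lb : ∀ v ∈ Ioo (-a) a, G v * (a⁻¹ * cφ) ≤ F v := fun v hv => by
    have harg := abs_add_div_div_lt_add_one hs hσ hθ₀ (abs_lt.mpr hv)
    dsimp only [F]
    gcongr
    exact hlb _ (abs_lt.mp (harg.trans_le hτ))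
  calc 2 * cφ * exp (-(n * σ ^ 2) / 6) = a⁻¹ * cφ * (2 * a * exp (-a ^ 2 / 6)) := by
        rw [ha_sq]; field_simp
    _ ≤ a⁻¹ * cφ * ∫ v in -a..a, G v := by
        gcongr
        exact two_mul_mul_exp_le_integral_exp_neg_sq_div_two_add_mul ha ε
    _ = ∫ v in Ioo (-a) a, G v * (a⁻¹ * cφ) := by
        rw [intervalIntegral.integral_of_le (by linarith), integral_Ioc_eq_integral_Ioo,
          integral_mul_const, mul_comm]
    _ ≤ ∫ v in Ioo (-a) a, F v :=
        setIntegral_mono_on (hG_int.mul_const _).integrableOn hF_int.integrableOn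
          measurableSet_Ioo hF_lb
    _ ≤ ∫ v, F v := setIntegral_le_integral hF_int (.of_forall hF_nonneg)

theorem denominator_lower_bound (φ : ℝ → ℝ) (cφ Cφ τ M : ℝ)
    (hφ_meas : Measurable φ) (hφ_nonneg : ∀ x, 0 ≤ φ x)
    (hφ_prob : (∫ x : ℝ, φ x) = 1)
    (hc : 0 < cφ) (hcC : cφ ≤ Cφ)
    (hub : ∀ x : ℝ, φ x ≤ Cφ)
    (hlb : ∀ x ∈ Set.Ioo (-τ) τ, cφ ≤ φ x)
    (hmom : Integrable (fun x : ℝ => x ^ 2 * φ x))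
    (hM : 0 < M) (hτ : M + 1 ≤ τ) :
    ∀ n : ℕ, 1 ≤ n → ∀ σ : ℝ, 0 < σ → ∀ θ₀ : ℝ, |θ₀| ≤ M * σ → ∀ ε : ℝ,
      2 * cφ * Real.exp (-(n * σ ^ 2) / 6) ≤ Dint φ n σ θ₀ ε :=
  denominator_lower_bound_general φ cφ Cφ τ M hφ_meas hφ_nonneg hc hub hlb hτ
end

section
/- For every n ≥ 1, every σ > 0 and every θ₀ ∈ ℝ, the expectation over ε ~ N(0,1) of the tail numerator integral satisfies E[ ∫_{|v| > √n σ} v² exp(−v²/2 + εv)·(√n σ)^{−1} φ((θ₀ + v/√n)/σ) dv ] ≤ 2 n σ² ( θ₀²/σ² + ∫_ℝ u² φ(u) du ). -/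
/-!
Since `𝔼[exp (ε v)] = exp (v ^ 2 / 2)` for `ε ~ N(0,1)`, the tilt `exp (-v ^ 2 / 2 + ε v)` has
mean one, so by Tonelli the expectation is at most `∫ v ^ 2 (√n σ)⁻¹ φ ((θ₀ + v / √n) / σ) dv`
over the whole line. The substitution `u = (θ₀ + v / √n) / σ` turns this into
`∫ (√n (σ u - θ₀)) ^ 2 φ u du`, and `(x - y) ^ 2 ≤ 2 x ^ 2 + 2 y ^ 2` gives the bound.
-/

open MeasureTheory ProbabilityTheory Real

lemma lintegral_enorm_exp_tilt_gaussianReal (v : ℝ) :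
    ∫⁻ ε, ‖exp (-v ^ 2 / 2 + ε * v)‖ₑ ∂gaussianReal 0 1 = 1 := by
  have h_eq : (fun ε => exp (-v ^ 2 / 2 + ε * v)) = fun ε => exp (-v ^ 2 / 2) * exp (v * ε) := by
    ext ε
    rw [exp_add, mul_comm ε]
  have h_int : Integrable (fun ε => exp (-v ^ 2 / 2 + ε * v)) (gaussianReal 0 1) := by
    rw [h_eq]
    exact (integrable_exp_mul_gaussianReal v).const_mul _
  have h_mean : ∫ ε, exp (-v ^ 2 / 2 + ε * v) ∂gaussianReal 0 1 = 1 := by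
    have h_mgf := congrFun (mgf_fun_id_gaussianReal (μ := 0) (v := 1)) v
    rw [mgf] at h_mgf
    rw [h_eq, integral_const_mul, h_mgf, ← exp_add, exp_eq_one_iff]
    push_cast
    ring
  simp_rw [enorm_eq_ofReal (exp_pos _).le]
  rw [← ofReal_integral_eq_lintegral_ofReal h_int (ae_of_all _ fun _ => (exp_pos _).le), h_mean,
    ENNReal.ofReal_one]

lemma abs_integral_setIntegral_exp_tilt_le {f : ℝ → ℝ} (hf : Integrable f) (S : Set ℝ) :
    |∫ ε, (∫ v in S, f v * exp (-v ^ 2 / 2 + ε * v)) ∂gaussianReal 0 1| ≤ ∫ v, |f v| := by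
  rw [← ENNReal.ofReal_le_ofReal_iff (integral_nonneg fun v => abs_nonneg _),
    ← enorm_eq_ofReal_abs,
    ofReal_integral_eq_lintegral_ofReal hf.abs (ae_of_all _ fun _ => abs_nonneg _)]
  have h_meas : AEMeasurable (Function.uncurry fun ε v => ‖f v‖ₑ * ‖exp (-v ^ 2 / 2 + ε * v)‖ₑ)
      ((gaussianReal 0 1).prod (volume.restrict S)) :=
    (hf.1.restrict.comp_snd).enorm.mul (by fun_prop)
  calc ‖∫ ε, (∫ v in S, f v * exp (-v ^ 2 / 2 + ε * v)) ∂gaussianReal 0 1‖ₑ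
      ≤ ∫⁻ ε, ‖∫ v in S, f v * exp (-v ^ 2 / 2 + ε * v)‖ₑ ∂gaussianReal 0 1 :=
        enorm_integral_le_lintegral_enorm _
    _ ≤ ∫⁻ ε, (∫⁻ v in S, ‖f v‖ₑ * ‖exp (-v ^ 2 / 2 + ε * v)‖ₑ) ∂gaussianReal 0 1 :=
        lintegral_mono fun ε =>
          (enorm_integral_le_lintegral_enorm _).trans_eq (by simp_rw [enorm_mul])
    _ = ∫⁻ v in S, ∫⁻ ε, ‖f v‖ₑ * ‖exp (-v ^ 2 / 2 + ε * v)‖ₑ ∂gaussianReal 0 1 :=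
        lintegral_lintegral_swap h_meas
    _ = ∫⁻ v in S, ‖f v‖ₑ := by
        congr! 2 with v
        rw [lintegral_const_mul _ (by fun_prop), lintegral_enorm_exp_tilt_gaussianReal, mul_one]
    _ ≤ ∫⁻ v, ENNReal.ofReal |f v| := by
        simp_rw [← enorm_eq_ofReal_abs]
        exact setLIntegral_le_lintegral S _

section RescaledDensity

variable {F φ : ℝ → ℝ} {a : ℝ} (b : ℝ)

lemma mul_rescaled_density_eq (ha : a ≠ 0) (v : ℝ) :
    F v * (a⁻¹ * φ (v / a + b)) = a⁻¹ * (F (a * (a⁻¹ * v + b - b)) * φ (a⁻¹ * v + b)) := by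
  rw [add_sub_cancel_right, mul_inv_cancel_left₀ ha, div_eq_inv_mul]
  ring

lemma integral_mul_rescaled_density (ha : 0 < a) :
    ∫ v, F v * (a⁻¹ * φ (v / a + b)) = ∫ u, F (a * (u - b)) * φ u := by
  simp_rw [mul_rescaled_density_eq b ha.ne', integral_const_mul]
  rw [Measure.integral_comp_inv_mul_left (fun u => F (a * (u + b - b)) * φ (u + b)),
    integral_add_right_eq_self (fun u => F (a * (u - b)) * φ u), abs_of_pos ha, smul_eq_mul,
    inv_mul_cancel_left₀ ha.ne']

lemma integrable_mul_rescaled_density (ha : a ≠ 0)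
    (h : Integrable fun u => F (a * (u - b)) * φ u) :
    Integrable fun v => F v * (a⁻¹ * φ (v / a + b)) := by
  simp_rw [mul_rescaled_density_eq b ha]
  exact ((h.comp_add_right b).comp_mul_left' (inv_ne_zero ha)).const_mul _

end RescaledDensity

section SecondMoment

variable {φ : ℝ → ℝ} (a b : ℝ)

lemma sq_mul_sub_mul_le (hφ_nonneg : ∀ x, 0 ≤ φ x) (u : ℝ) :
    (a * (u - b)) ^ 2 * φ u ≤ 2 * a ^ 2 * (u ^ 2 * φ u) + 2 * a ^ 2 * b ^ 2 * φ u := by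
  nlinarith [mul_nonneg (sq_nonneg (a * (u + b))) (hφ_nonneg u)]

lemma integrable_sq_mul_sub_mul (hφ_nonneg : ∀ x, 0 ≤ φ x) (hφ : Integrable φ)
    (hmom : Integrable fun u => u ^ 2 * φ u) :
    Integrable fun u => (a * (u - b)) ^ 2 * φ u := by
  have h_dom : Integrable fun u => 2 * a ^ 2 * (u ^ 2 * φ u) + 2 * a ^ 2 * b ^ 2 * φ u :=
    (hmom.const_mul _).add (hφ.const_mul _)
  refine h_dom.mono' (by fun_prop) (ae_of_all _ fun u => ?_)
  rw [norm_of_nonneg (mul_nonneg (sq_nonneg _) (hφ_nonneg u))]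
  exact sq_mul_sub_mul_le a b hφ_nonneg u

lemma integral_sq_mul_sub_mul_le (hφ_nonneg : ∀ x, 0 ≤ φ x) (hφ : Integrable φ)
    (hmom : Integrable fun u => u ^ 2 * φ u) (hφ_one : ∫ u, φ u = 1) :
    ∫ u, (a * (u - b)) ^ 2 * φ u ≤ 2 * a ^ 2 * (b ^ 2 + ∫ u, u ^ 2 * φ u) := by
  calc ∫ u, (a * (u - b)) ^ 2 * φ u
      ≤ ∫ u, (2 * a ^ 2 * (u ^ 2 * φ u) + 2 * a ^ 2 * b ^ 2 * φ u) :=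
        integral_mono (integrable_sq_mul_sub_mul a b hφ_nonneg hφ hmom)
          ((hmom.const_mul _).add (hφ.const_mul _)) (sq_mul_sub_mul_le a b hφ_nonneg)
    _ = 2 * a ^ 2 * (b ^ 2 + ∫ u, u ^ 2 * φ u) := by
        rw [integral_add (hmom.const_mul _) (hφ.const_mul _), integral_const_mul,
          integral_const_mul, hφ_one]
        ring

end SecondMoment

theorem tail_numerator_bound_general (φ : ℝ → ℝ)
    (hφ_nonneg : ∀ x, 0 ≤ φ x)
    (hφ_prob : (∫ x : ℝ, φ x) = 1)
    (hmom : Integrable (fun x : ℝ => x ^ 2 * φ x)) :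
    ∀ n : ℕ, 1 ≤ n → ∀ σ : ℝ, 0 < σ → ∀ θ₀ : ℝ,
      (∫ ε, (∫ v in {v : ℝ | Real.sqrt n * σ < |v|},
          v ^ 2 * Real.exp (-v ^ 2 / 2 + ε * v) *
            ((Real.sqrt n * σ)⁻¹ * φ ((θ₀ + v / Real.sqrt n) / σ)))
        ∂(gaussianReal 0 1)) ≤
        2 * n * σ ^ 2 * (θ₀ ^ 2 / σ ^ 2 + ∫ u : ℝ, u ^ 2 * φ u) := by
  intro n hn σ hσ θ₀
  have hφ : Integrable φ := by
    by_contra h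
    simp [integral_undef h] at hφ_prob
  have h_sqrt : 0 < Real.sqrt n := Real.sqrt_pos.2 (by exact_mod_cast hn)
  set a := Real.sqrt n * σ with ha_def
  have ha : 0 < a := mul_pos h_sqrt hσ
  have h_arg (v : ℝ) : (θ₀ + v / Real.sqrt n) / σ = v / a + θ₀ / σ := by
    rw [ha_def]
    field_simp
    ring
  have hf : Integrable fun v => v ^ 2 * (a⁻¹ * φ (v / a + θ₀ / σ)) :=
    integrable_mul_rescaled_density _ ha.ne' (integrable_sq_mul_sub_mul a _ hφ_nonneg hφ hmom)
  simp_rw [mul_right_comm _ (Real.exp _), h_arg]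
  calc _ ≤ _ := le_abs_self _
    _ ≤ ∫ v, |v ^ 2 * (a⁻¹ * φ (v / a + θ₀ / σ))| := abs_integral_setIntegral_exp_tilt_le hf _
    _ = ∫ v, v ^ 2 * (a⁻¹ * φ (v / a + θ₀ / σ)) :=
        integral_congr_ae <| ae_of_all _ fun v => abs_of_nonneg <|
          mul_nonneg (sq_nonneg v) (mul_nonneg (inv_nonneg.2 ha.le) (hφ_nonneg _))
    _ = ∫ u, (a * (u - θ₀ / σ)) ^ 2 * φ u := integral_mul_rescaled_density _ ha
    _ ≤ 2 * a ^ 2 * ((θ₀ / σ) ^ 2 + ∫ u, u ^ 2 * φ u) :=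
        integral_sq_mul_sub_mul_le a _ hφ_nonneg hφ hmom hφ_prob
    _ = 2 * n * σ ^ 2 * (θ₀ ^ 2 / σ ^ 2 + ∫ u, u ^ 2 * φ u) := by
        rw [ha_def, mul_pow, Real.sq_sqrt n.cast_nonneg, div_pow]
        ring

theorem tail_numerator_bound (φ : ℝ → ℝ) (cφ Cφ τ : ℝ)
    (hφ_meas : Measurable φ) (hφ_nonneg : ∀ x, 0 ≤ φ x)
    (hφ_prob : (∫ x : ℝ, φ x) = 1)
    (hc : 0 < cφ) (hcC : cφ ≤ Cφ) (hτ : 0 < τ)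
    (hub : ∀ x : ℝ, φ x ≤ Cφ)
    (hlb : ∀ x ∈ Set.Ioo (-τ) τ, cφ ≤ φ x)
    (hmom : Integrable (fun x : ℝ => x ^ 2 * φ x)) :
    ∀ n : ℕ, 1 ≤ n → ∀ σ : ℝ, 0 < σ → ∀ θ₀ : ℝ,
      (∫ ε, (∫ v in {v : ℝ | Real.sqrt n * σ < |v|},
          v ^ 2 * Real.exp (-v ^ 2 / 2 + ε * v) *
            ((Real.sqrt n * σ)⁻¹ * φ ((θ₀ + v / Real.sqrt n) / σ)))
        ∂(gaussianReal 0 1)) ≤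
        2 * n * σ ^ 2 * (θ₀ ^ 2 / σ ^ 2 + ∫ u : ℝ, u ^ 2 * φ u) :=
  tail_numerator_bound_general φ hφ_nonneg hφ_prob hmom
end

section
/- For all γ > 0 and δ > 0 there exists a constant C = C(γ, δ) such that for every integer J ≥ 1 and every real double sequence c = (c_{lk}), l ≥ 1, 0 ≤ k < 2^l: Σ_{l ≥ 1} Σ_{0 ≤ k < 2^l} c_{lk}² ≤ C · ( 2^J J^{2δ} · Σ_{l,k} 2^{−l} l^{−2δ} c_{lk}² + 2^{−2Jγ} J² · Σ_{l,k} 2^{2γl} l^{−2} c_{lk}² ). -/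
set_option maxHeartbeats 1000000

open ENNReal

lemma sq_le_four_exp {x : ℝ} (hx : 0 ≤ x) : x ^ 2 ≤ 4 * Real.exp x := by
  have h1 : x / 2 + 1 ≤ Real.exp (x / 2) := Real.add_one_le_exp _
  have h2 : (x / 2 + 1) ^ 2 ≤ Real.exp (x / 2) ^ 2 :=
    pow_le_pow_left₀ (by linarith) h1 2
  have h3 : Real.exp (x / 2) ^ 2 = Real.exp x := by
    rw [sq, ← Real.exp_add]; ring_nf
  nlinarith [sq_nonneg x]

lemma key_ineq (γ δ : ℝ) (hγ : 0 < γ) (hδ : 0 < δ) (J : ℕ) (hJ : 1 ≤ J) (l : ℕ+) :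
    1 ≤ (2 + 2 / (γ * Real.log 2) ^ 2) *
      ((2 : ℝ) ^ (J : ℝ) * (J : ℝ) ^ (2 * δ) *
          ((2 : ℝ) ^ (-((l : ℕ) : ℝ)) * ((l : ℕ) : ℝ) ^ (-(2 * δ)))
        + (2 : ℝ) ^ (-(2 * (J : ℝ) * γ)) * (J : ℝ) ^ 2 *
          ((2 : ℝ) ^ (2 * γ * ((l : ℕ) : ℝ)) * ((l : ℕ) : ℝ) ^ (-(2 : ℝ)))) := by
  set L : ℝ := ((l : ℕ) : ℝ) with hLdef
  set Jr : ℝ := (J : ℝ) with hJdef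
  have hL1 : 1 ≤ L := by rw [hLdef]; exact_mod_cast l.pos
  have hJr1 : 1 ≤ Jr := by rw [hJdef]; exact_mod_cast hJ
  have hL0 : 0 < L := by linarith
  have hJr0 : 0 < Jr := by linarith
  have hlog : 0 < Real.log 2 := Real.log_pos one_lt_two
  have ha : 0 < γ * Real.log 2 := by positivity
  set C : ℝ := 2 + 2 / (γ * Real.log 2) ^ 2 with hCdef
  have hC2 : 2 ≤ C := by
    rw [hCdef]
    have : 0 ≤ 2 / (γ * Real.log 2) ^ 2 := by positivity
    linarith
  have ht1nn : 0 ≤ (2 : ℝ) ^ Jr * Jr ^ (2 * δ) * ((2 : ℝ) ^ (-L) * L ^ (-(2 * δ))) := by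
    positivity
  have ht2nn : 0 ≤ (2 : ℝ) ^ (-(2 * Jr * γ)) * Jr ^ 2 * ((2 : ℝ) ^ (2 * γ * L) * L ^ (-(2 : ℝ))) := by
    positivity
  rcases le_total L Jr with hc | hc
  · -- small frequencies: first term is ≥ 1
    have h1 : (1 : ℝ) ≤ (2 : ℝ) ^ Jr * (2 : ℝ) ^ (-L) := by
      rw [← Real.rpow_add two_pos]
      calc (1 : ℝ) = (2 : ℝ) ^ (0 : ℝ) := (Real.rpow_zero 2).symm
        _ ≤ (2 : ℝ) ^ (Jr + -L) := by
            apply Real.rpow_le_rpow_of_exponent_le (by norm_num)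
            linarith
    have h2 : (1 : ℝ) ≤ Jr ^ (2 * δ) * L ^ (-(2 * δ)) := by
      have hp : 0 < L ^ (2 * δ) := Real.rpow_pos_of_pos hL0 _
      have hle : L ^ (2 * δ) ≤ Jr ^ (2 * δ) :=
        Real.rpow_le_rpow hL0.le hc (by positivity)
      rw [Real.rpow_neg hL0.le, ← div_eq_mul_inv, le_div_iff₀ hp, one_mul]
      exact hle
    have ht1 : (1 : ℝ) ≤ (2 : ℝ) ^ Jr * Jr ^ (2 * δ) * ((2 : ℝ) ^ (-L) * L ^ (-(2 * δ))) := by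
      have e : (2 : ℝ) ^ Jr * Jr ^ (2 * δ) * ((2 : ℝ) ^ (-L) * L ^ (-(2 * δ)))
          = ((2 : ℝ) ^ Jr * (2 : ℝ) ^ (-L)) * (Jr ^ (2 * δ) * L ^ (-(2 * δ))) := by ring
      rw [e]
      nlinarith
    nlinarith
  · -- large frequencies: second term dominates
    set m : ℝ := L - Jr with hmdef
    have hm : 0 ≤ m := by linarith
    set E : ℝ := (2 : ℝ) ^ (2 * γ * m) with hEdef
    have hEexp : E = Real.exp (2 * γ * m * Real.log 2) := by
      rw [hEdef, Real.rpow_def_of_pos two_pos]; ring_nf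
    have hE1 : 1 ≤ E := by
      rw [hEexp]; exact Real.one_le_exp (by positivity)
    have hE2 : (2 * γ * m * Real.log 2) ^ 2 ≤ 4 * E := by
      rw [hEexp]; exact sq_le_four_exp (by positivity)
    have hEa : m ^ 2 * (γ * Real.log 2) ^ 2 ≤ E := by nlinarith
    have hCE : 2 + 2 * m ^ 2 ≤ C * E := by
      have h1 : 2 * m ^ 2 ≤ (2 / (γ * Real.log 2) ^ 2) * E := by
        rw [div_mul_eq_mul_div, le_div_iff₀ (by positivity)]
        nlinarith
      have h2 : (2 : ℝ) ≤ 2 * E := by linarith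
      calc 2 + 2 * m ^ 2 ≤ 2 * E + (2 / (γ * Real.log 2) ^ 2) * E := by linarith
        _ = C * E := by rw [hCdef]; ring
    have hL2 : L ^ 2 ≤ C * E * Jr ^ 2 := by
      have hLm : L = Jr + m := by rw [hmdef]; ring
      have h1 : L ^ 2 ≤ Jr ^ 2 * (2 + 2 * m ^ 2) := by
        rw [hLm]
        nlinarith [sq_nonneg (Jr - m), mul_nonneg (sq_nonneg m) (show (0:ℝ) ≤ Jr ^ 2 - 1 by nlinarith)]
      have h2 : Jr ^ 2 * (2 + 2 * m ^ 2) ≤ Jr ^ 2 * (C * E) := by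
        apply mul_le_mul_of_nonneg_left hCE (by positivity)
      linarith
    have e1 : (2 : ℝ) ^ (-(2 * Jr * γ)) * (2 : ℝ) ^ (2 * γ * L) = E := by
      rw [hEdef, ← Real.rpow_add two_pos]; congr 1; ring
    have e2 : L ^ (-(2 : ℝ)) = (L ^ 2)⁻¹ := by
      rw [show (-(2 : ℝ)) = -((2 : ℕ) : ℝ) by norm_num, Real.rpow_neg hL0.le,
        Real.rpow_natCast]
    have ht2 : (1 : ℝ) ≤ C * ((2 : ℝ) ^ (-(2 * Jr * γ)) * Jr ^ 2 *
        ((2 : ℝ) ^ (2 * γ * L) * L ^ (-(2 : ℝ)))) := by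
      have heq : C * ((2 : ℝ) ^ (-(2 * Jr * γ)) * Jr ^ 2 *
          ((2 : ℝ) ^ (2 * γ * L) * L ^ (-(2 : ℝ)))) = C * E * Jr ^ 2 * (L ^ 2)⁻¹ := by
        rw [e2, ← e1]; ring
      rw [heq]
      calc (1 : ℝ) = L ^ 2 * (L ^ 2)⁻¹ := (mul_inv_cancel₀ (by positivity)).symm
        _ ≤ C * E * Jr ^ 2 * (L ^ 2)⁻¹ := by
            apply mul_le_mul_of_nonneg_right hL2 (by positivity)
    nlinarith [mul_nonneg (by linarith : (0:ℝ) ≤ C) ht1nn]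

theorem interpolation_inequality (γ δ : ℝ) (hγ : 0 < γ) (hδ : 0 < δ) :
    ∃ C : ℝ, 0 < C ∧ ∀ J : ℕ, 1 ≤ J → ∀ c : (l : ℕ+) → Fin (2 ^ (l : ℕ)) → ℝ,
      (∑' (l : ℕ+) (k : Fin (2 ^ (l : ℕ))), ENNReal.ofReal (c l k ^ 2))
        ≤ ENNReal.ofReal C *
          (ENNReal.ofReal ((2 : ℝ) ^ (J : ℝ) * (J : ℝ) ^ (2 * δ)) *
              ∑' (l : ℕ+) (k : Fin (2 ^ (l : ℕ))),
                ENNReal.ofReal ((2 : ℝ) ^ (-((l : ℕ) : ℝ)) * ((l : ℕ) : ℝ) ^ (-(2 * δ)) * c l k ^ 2)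
            + ENNReal.ofReal ((2 : ℝ) ^ (-(2 * (J : ℝ) * γ)) * (J : ℝ) ^ 2) *
              ∑' (l : ℕ+) (k : Fin (2 ^ (l : ℕ))),
                ENNReal.ofReal ((2 : ℝ) ^ (2 * γ * ((l : ℕ) : ℝ)) * ((l : ℕ) : ℝ) ^ (-(2 : ℝ)) * c l k ^ 2)) := by
  set C : ℝ := 2 + 2 / (γ * Real.log 2) ^ 2 with hCdef
  have hC0 : 0 < C := by positivity
  refine ⟨C, hC0, ?_⟩
  intro J hJ c
  set A : ℝ := (2 : ℝ) ^ (J : ℝ) * (J : ℝ) ^ (2 * δ) with hAdef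
  set B : ℝ := (2 : ℝ) ^ (-(2 * (J : ℝ) * γ)) * (J : ℝ) ^ 2 with hBdef
  have hJr0 : (0:ℝ) < (J : ℝ) := Nat.cast_pos.mpr hJ
  have hA0 : 0 ≤ A := by positivity
  have hB0 : 0 ≤ B := by positivity
  calc (∑' (l : ℕ+) (k : Fin (2 ^ (l : ℕ))), ENNReal.ofReal (c l k ^ 2))
      ≤ ∑' (l : ℕ+) (k : Fin (2 ^ (l : ℕ))),
          (ENNReal.ofReal C * (ENNReal.ofReal A *
              ENNReal.ofReal ((2 : ℝ) ^ (-((l : ℕ) : ℝ)) * ((l : ℕ) : ℝ) ^ (-(2 * δ)) * c l k ^ 2)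
            + ENNReal.ofReal B *
              ENNReal.ofReal ((2 : ℝ) ^ (2 * γ * ((l : ℕ) : ℝ)) * ((l : ℕ) : ℝ) ^ (-(2 : ℝ)) * c l k ^ 2))) := by
        apply ENNReal.tsum_le_tsum
        intro l
        apply ENNReal.tsum_le_tsum
        intro k
        have hwx : 0 ≤ (2 : ℝ) ^ (-((l : ℕ) : ℝ)) * ((l : ℕ) : ℝ) ^ (-(2 * δ)) * c l k ^ 2 := by
          have hL0 : (0:ℝ) < ((l : ℕ) : ℝ) := by exact_mod_cast l.pos
          positivity
        have hwy : 0 ≤ (2 : ℝ) ^ (2 * γ * ((l : ℕ) : ℝ)) * ((l : ℕ) : ℝ) ^ (-(2 : ℝ)) * c l k ^ 2 := by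
          have hL0 : (0:ℝ) < ((l : ℕ) : ℝ) := by exact_mod_cast l.pos
          positivity
        rw [← ENNReal.ofReal_mul hA0, ← ENNReal.ofReal_mul hB0,
          ← ENNReal.ofReal_add (by positivity) (by positivity),
          ← ENNReal.ofReal_mul hC0.le]
        apply ENNReal.ofReal_le_ofReal
        have hkey := key_ineq γ δ hγ hδ J hJ l
        rw [← hAdef, ← hBdef, ← hCdef] at hkey
        calc c l k ^ 2 = 1 * c l k ^ 2 := by ring
          _ ≤ (C * (A * ((2 : ℝ) ^ (-((l : ℕ) : ℝ)) * ((l : ℕ) : ℝ) ^ (-(2 * δ)))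
                + B * ((2 : ℝ) ^ (2 * γ * ((l : ℕ) : ℝ)) * ((l : ℕ) : ℝ) ^ (-(2 : ℝ))))) * c l k ^ 2 :=
              mul_le_mul_of_nonneg_right hkey (sq_nonneg _)
          _ = C * (A * ((2 : ℝ) ^ (-((l : ℕ) : ℝ)) * ((l : ℕ) : ℝ) ^ (-(2 * δ)) * c l k ^ 2)
                + B * ((2 : ℝ) ^ (2 * γ * ((l : ℕ) : ℝ)) * ((l : ℕ) : ℝ) ^ (-(2 : ℝ)) * c l k ^ 2)) := by
              ring
    _ = ENNReal.ofReal C *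
          (ENNReal.ofReal A * ∑' (l : ℕ+) (k : Fin (2 ^ (l : ℕ))),
              ENNReal.ofReal ((2 : ℝ) ^ (-((l : ℕ) : ℝ)) * ((l : ℕ) : ℝ) ^ (-(2 * δ)) * c l k ^ 2)
            + ENNReal.ofReal B * ∑' (l : ℕ+) (k : Fin (2 ^ (l : ℕ))),
              ENNReal.ofReal ((2 : ℝ) ^ (2 * γ * ((l : ℕ) : ℝ)) * ((l : ℕ) : ℝ) ^ (-(2 : ℝ)) * c l k ^ 2)) := by
        simp only [mul_add, ENNReal.tsum_add, ENNReal.tsum_mul_left]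
end
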